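/- arXiv:2110.08541 — 5 statements merged into one kernel-verified Lean document; each statement's English description precedes it below -/
import Mathlib

section
/- Let (i,k,ℓ) be a permutation of (1,2,3) and let r : I → SO(3) be absolutely continuous with rows r₁, r₂, r₃ satisfying r_k' · r_ℓ = 0 almost everywhere on I. Set β = r_i : I → S². Then for j = k and for j = ℓ, the row r_j is the parallel transport of r_j(0) along β, i.e. r_j(t) = Π_{β|_(0,t)} r_j(0) for all t ∈ I; equivalently, r_j'(t) = −(r_j(t) · β'(t)) β(t) almost everywhere on I. -/
open MeasureTheory Set Filter Matrix
open scoped RealInnerProductSpace Topology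

noncomputable section

/-- Euclidean 3-space. -/
abbrev E3 : Type := EuclideanSpace ℝ (Fin 3)

/-- Cross product on `ℝ³`. -/
def cross3 (v w : E3) : E3 :=
  (WithLp.equiv 2 (Fin 3 → ℝ)).symm
    ![v 1 * w 2 - v 2 * w 1, v 2 * w 0 - v 0 * w 2, v 0 * w 1 - v 1 * w 0]

/-- The `i`-th row of a 3×3 matrix, as a vector in `ℝ³`; for `r ∈ SO(3)` this is `rᵀ eᵢ`. -/
def row3 (M : Matrix (Fin 3) (Fin 3) ℝ) (i : Fin 3) : E3 :=
  (WithLp.equiv 2 (Fin 3 → ℝ)).symm (M i)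

/-- The set of rotation matrices. -/
def SO3 : Set (Matrix (Fin 3) (Fin 3) ℝ) :=
  {M | M * Mᵀ = 1 ∧ M.det = 1}

/-- Lebesgue measure restricted to the unit interval `I = (0,1)`. -/
def muI : Measure ℝ := volume.restrict (Set.Ioo 0 1)

/-- `f` is absolutely continuous on `[a,b]` with (a.e.) derivative `f'` (fundamental theorem of
calculus form); this encodes `f ∈ W^{1,1}((a,b))` via its continuous representative. -/
def FTCOn (f f' : ℝ → E3) (a b : ℝ) : Prop :=
  IntervalIntegrable f' volume a b ∧
  ∀ t ∈ Set.Icc a b, f t = f a + ∫ s in a..t, f' s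

/-- `V` is the parallel transport of `v` along the spherical curve `β` (with derivative `β'`)
on `[a,b]`: the absolutely continuous solution of `V' = -(V·β')β`, `V a = v`, in integral form.
`V t` is the quantity denoted `Π_{β|_(a,t)} v`. -/
def IsParTrans (β β' : ℝ → E3) (a b : ℝ) (v : E3) (V : ℝ → E3) : Prop :=
  V a = v ∧
  IntervalIntegrable (fun s => ⟪V s, β' s⟫ • β s) volume a b ∧
  ∀ t ∈ Set.Icc a b, V t = v - ∫ s in a..t, ⟪V s, β' s⟫ • β s

/-!
Differentiating the orthonormality relations `r_a · r_b = δ_ab` shows that the matrix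
`(r_a' · r_b)` is skew-symmetric a.e. Expand `r_j'` in the moving frame `r₁, r₂, r₃`: its
`r_j`-coefficient vanishes by skew-symmetry and its coefficient along the other row of
`{r_k, r_ℓ}` vanishes by the constraint, so `r_j' = (r_j' · r_i) r_i = -(r_j · r_i') r_i`.
Integrating this identity gives the parallel-transport equation.
-/

section InnerProductSpace

variable {E : Type*} [NormedAddCommGroup E] [InnerProductSpace ℝ E]

lemma Orthonormal.eq_inner_smul_of_inner_eq_zero {ι : Type*} [Fintype ι] [DecidableEq ι]
    {v : ι → E} (hv : Orthonormal ℝ v) (hcard : Fintype.card ι = Module.finrank ℝ E)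
    {x : E} {i : ι} (hx : ∀ a ≠ i, ⟪v a, x⟫ = 0) : x = ⟪v i, x⟫ • v i := by
  have : Nonempty ι := ⟨i⟩
  let b := OrthonormalBasis.mk hv <| by
    simpa using (basisOfOrthonormalOfCardEqFinrank hv hcard).span_eq.ge
  have hb : ⇑b = v := OrthonormalBasis.coe_mk hv _
  calc x = ∑ a, ⟪b a, x⟫ • b a := (b.sum_repr' x).symm
    _ = ⟪v i, x⟫ • v i := by
      rw [hb, Finset.sum_eq_single i (fun a _ ha => by rw [hx a ha, zero_smul]) (by simp)]

lemma inner_hasDerivAt_add_eq_zero_of_eventuallyEq {u v : ℝ → E} {u' v' : E} {t c : ℝ}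
    (hu : HasDerivAt u u' t) (hv : HasDerivAt v v' t)
    (hc : (fun s => ⟪u s, v s⟫) =ᶠ[𝓝 t] fun _ => c) :
    ⟪u', v t⟫ + ⟪u t, v'⟫ = 0 := by
  have h := (hu.inner ℝ hv).unique ((hasDerivAt_const t c).congr_of_eventuallyEq hc)
  linarith

end InnerProductSpace

lemma FTCOn.ae_hasDerivAt {f f' : ℝ → E3} {a b : ℝ} (hf : FTCOn f f' a b) :
    ∀ᵐ t ∂volume.restrict (Ioo a b), HasDerivAt f (f' t) t := by
  rw [ae_restrict_iff' measurableSet_Ioo]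
  filter_upwards [hf.1.ae_hasDerivAt_integral] with t ht htI
  have hab : a ≤ b := (htI.1.trans htI.2).le
  have hmem : ∀ s ∈ Icc a b, s ∈ uIcc a b := fun s hs => by rwa [uIcc_of_le hab]
  refine ((ht (hmem t (Ioo_subset_Icc_self htI)) a (hmem a (left_mem_Icc.2 hab))).const_add
    (f a)).congr_of_eventuallyEq ?_
  filter_upwards [Ioo_mem_nhds htI.1 htI.2] with s hs
  exact hf.2 s (Ioo_subset_Icc_self hs)

lemma orthonormal_row3 {M : Matrix (Fin 3) (Fin 3) ℝ} (hM : M ∈ SO3) :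
    Orthonormal ℝ (row3 M) := by
  rw [orthonormal_iff_ite]
  intro a b
  rw [← Matrix.one_apply, ← hM.1]
  simp [row3, Matrix.mul_apply, PiLp.inner_apply, mul_comm]

lemma IsParTrans.of_ae_eq {β β' V V' : ℝ → E3} {a b : ℝ} (hab : a ≤ b) (hV : FTCOn V V' a b)
    (hode : ∀ᵐ s ∂volume.restrict (Ioo a b), V' s = -(⟪V s, β' s⟫ • β s)) :
    IsParTrans β β' a b (V a) V := by
  rw [restrict_Ioo_eq_restrict_Ioc] at hode
  have hint : IntervalIntegrable (fun s => -(⟪V s, β' s⟫ • β s)) volume a b :=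
    hV.1.congr_ae (by rwa [uIoc_of_le hab])
  refine ⟨rfl, by simpa only [Pi.neg_def, neg_neg] using hint.neg, fun t ht => ?_⟩
  rw [hV.2 t ht, sub_eq_add_neg, ← intervalIntegral.integral_neg]
  congr 1
  refine intervalIntegral.integral_congr_ae ?_
  filter_upwards [(ae_restrict_iff' measurableSet_Ioc).1 hode] with s hs hst
  rw [uIoc_of_le ht.1] at hst
  exact hs (Ioc_subset_Ioc_right ht.2 hst)

lemma row3_skew_of_hasDerivAt {r : ℝ → Matrix (Fin 3) (Fin 3) ℝ} {M' : Matrix (Fin 3) (Fin 3) ℝ}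
    {t : ℝ} (hSO : ∀ᶠ u in 𝓝 t, r u ∈ SO3)
    (hd : ∀ a, HasDerivAt (fun u => row3 (r u) a) (row3 M' a) t) (a b : Fin 3) :
    ⟪row3 M' a, row3 (r t) b⟫ + ⟪row3 (r t) a, row3 M' b⟫ = 0 :=
  inner_hasDerivAt_add_eq_zero_of_eventuallyEq (hd a) (hd b)
    (hSO.mono fun _ hu => orthonormal_iff_ite.1 (orthonormal_row3 hu) a b)

lemma row3_eq_neg_inner_smul_of_skew {M M' : Matrix (Fin 3) (Fin 3) ℝ} (hM : M ∈ SO3)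
    (hskew : ∀ a b, ⟪row3 M' a, row3 M b⟫ + ⟪row3 M a, row3 M' b⟫ = 0)
    {i k l : Fin 3} (hik : i ≠ k) (hkl : k ≠ l) (hil : i ≠ l)
    (hc : ⟪row3 M' k, row3 M l⟫ = 0) {j : Fin 3} (hj : j = k ∨ j = l) :
    row3 M' j = -⟪row3 M j, row3 M' i⟫ • row3 M i := by
  have hdiag : ⟪row3 M j, row3 M' j⟫ = 0 := by
    have := hskew j j; rw [real_inner_comm] at this; linarith
  have hkl' : ⟪row3 M k, row3 M' l⟫ = 0 := by linarith [hskew k l]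
  have hlk' : ⟪row3 M l, row3 M' k⟫ = 0 := by rwa [real_inner_comm]
  have hcover : ∀ a, a ≠ i → a = k ∨ a = l := by omega
  rw [(orthonormal_row3 hM).eq_inner_smul_of_inner_eq_zero (by simp) (i := i) (x := row3 M' j)
    fun a ha => by rcases hcover a ha with rfl | rfl <;> rcases hj with rfl | rfl <;> assumption]
  rw [real_inner_comm, ← neg_eq_of_add_eq_zero_left (hskew j i)]

/-- If `(i,k,ℓ)` is a permutation of `(1,2,3)`, `r : I → SO(3)` is absolutely
continuous and `r_k' · r_ℓ = 0` a.e., then with `β = r_i` the rows `r_j`, `j ∈ {k, ℓ}`, are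
parallel transported along `β`: `r_j(t) = Π_{β|_(0,t)} r_j(0)` for all `t`; equivalently
`r_j' = -(r_j · β') β` a.e. on `I`. -/
theorem statement0
    (r r' : ℝ → Matrix (Fin 3) (Fin 3) ℝ)
    (hSO : ∀ t ∈ Set.Icc (0:ℝ) 1, r t ∈ SO3)
    (hAC : ∀ i : Fin 3, FTCOn (fun t => row3 (r t) i) (fun t => row3 (r' t) i) 0 1)
    (i k l : Fin 3) (hik : i ≠ k) (hkl : k ≠ l) (hil : i ≠ l)
    (hconstraint : ∀ᵐ t ∂muI, ⟪row3 (r' t) k, row3 (r t) l⟫ = 0)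
    (j : Fin 3) (hj : j = k ∨ j = l) :
    IsParTrans (fun t => row3 (r t) i) (fun t => row3 (r' t) i) 0 1
      (row3 (r 0) j) (fun t => row3 (r t) j) ∧
    ∀ᵐ t ∂muI, row3 (r' t) j = -(⟪row3 (r t) j, row3 (r' t) i⟫) • row3 (r t) i := by
  have hderiv : ∀ᵐ t ∂muI, ∀ a, HasDerivAt (fun u => row3 (r u) a) (row3 (r' t) a) t :=
    ae_all_iff.2 fun a => (hAC a).ae_hasDerivAt
  have hode : ∀ᵐ t ∂muI, row3 (r' t) j = -⟪row3 (r t) j, row3 (r' t) i⟫ • row3 (r t) i := by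
    filter_upwards [hderiv, ae_restrict_mem measurableSet_Ioo, hconstraint] with t hd ht hc
    have hSOt : ∀ᶠ u in 𝓝 t, r u ∈ SO3 :=
      eventually_of_mem (Ioo_mem_nhds ht.1 ht.2) fun u hu => hSO u (Ioo_subset_Icc_self hu)
    exact row3_eq_neg_inner_smul_of_skew hSOt.self_of_nhds (row3_skew_of_hasDerivAt hSOt hd)
      hik hkl hil hc hj
  exact ⟨IsParTrans.of_ae_eq zero_le_one (hAC j) (hode.mono fun t ht => by rw [ht, neg_smul]),
    hode⟩
end
end

section
/- Let r ∈ C⁰([0,1], SO(3)) with first row r₁(t) = r(t)ᵀ e₁, and let γ̄ be a point in the interior of the convex hull of the set r₁([0,1]) ⊂ ℝ³. Then there exists an everywhere positive function η ∈ C^∞([0,1]) with ∫₀¹ η = 1 such that ∫₀¹ η(t) r₁(t) dt = γ̄. -/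
open MeasureTheory Set Filter Matrix
open scoped RealInnerProductSpace Topology

set_option maxHeartbeats 1000000

noncomputable section

/-- The set of points attainable as `∫ η f` with `η` a smooth positive density. -/
def Sset (f : ℝ → E3) : Set E3 :=
  {x | ∃ η : ℝ → ℝ, ContDiff ℝ (⊤ : ℕ∞) η ∧ (∀ t ∈ Set.Icc (0:ℝ) 1, 0 < η t) ∧
      (∫ t in (0:ℝ)..1, η t) = 1 ∧ (∫ t in (0:ℝ)..1, η t • f t) = x}

lemma Sset_convex (f : ℝ → E3) (hf : ContinuousOn f (Set.Icc 0 1)) :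
    Convex ℝ (Sset f) := by
  rintro x ⟨η₁, hc₁, hp₁, hi₁, hx₁⟩ y ⟨η₂, hc₂, hp₂, hi₂, hx₂⟩ a b ha hb hab
  refine ⟨fun t => a * η₁ t + b * η₂ t, ?_, ?_, ?_, ?_⟩
  · exact (contDiff_const.mul hc₁).add (contDiff_const.mul hc₂)
  · intro t ht
    rcases ha.lt_or_eq with ha' | ha'
    · exact add_pos_of_pos_of_nonneg (mul_pos ha' (hp₁ t ht))
        (mul_nonneg hb (hp₂ t ht).le)
    · have hb' : b = 1 := by linarith
      simp [← ha', hb']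
      exact hp₂ t ht
  · have i1 : IntervalIntegrable η₁ volume 0 1 := (hc₁.continuous).intervalIntegrable _ _
    have i2 : IntervalIntegrable η₂ volume 0 1 := (hc₂.continuous).intervalIntegrable _ _
    rw [intervalIntegral.integral_add (i1.const_mul a) (i2.const_mul b),
      intervalIntegral.integral_const_mul, intervalIntegral.integral_const_mul, hi₁, hi₂]
    linarith
  · have huIcc : Set.uIcc (0:ℝ) 1 = Set.Icc 0 1 := Set.uIcc_of_le zero_le_one
    have i1 : IntervalIntegrable (fun t => η₁ t • f t) volume 0 1 := by
      apply ContinuousOn.intervalIntegrable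
      rw [huIcc]
      exact (hc₁.continuous.continuousOn.smul hf)
    have i2 : IntervalIntegrable (fun t => η₂ t • f t) volume 0 1 := by
      apply ContinuousOn.intervalIntegrable
      rw [huIcc]
      exact (hc₂.continuous.continuousOn.smul hf)
    have : ∀ t : ℝ, (a * η₁ t + b * η₂ t) • f t
        = a • (η₁ t • f t) + b • (η₂ t • f t) := by
      intro t; rw [add_smul, mul_smul, mul_smul]
    simp_rw [this]
    have i1' : IntervalIntegrable (fun t => a • (η₁ t • f t)) volume 0 1 := i1.smul a
    have i2' : IntervalIntegrable (fun t => b • (η₂ t • f t)) volume 0 1 := i2.smul b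
    rw [intervalIntegral.integral_add i1' i2',
      intervalIntegral.integral_smul, intervalIntegral.integral_smul, hx₁, hx₂]

lemma Sset_approx_point (f : ℝ → E3) (hf : ContinuousOn f (Set.Icc 0 1))
    (hb : ∀ t ∈ Set.Icc (0:ℝ) 1, ‖f t‖ ≤ 1)
    {t₀ : ℝ} (ht₀ : t₀ ∈ Set.Icc (0:ℝ) 1) {δ : ℝ} (hδ : 0 < δ) :
    ∃ x ∈ Sset f, ‖x - f t₀‖ ≤ δ := by
  have huIcc : Set.uIcc (0:ℝ) 1 = Set.Icc 0 1 := Set.uIcc_of_le zero_le_one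
  -- continuity modulus
  obtain ⟨ρ, hρ, hmod⟩ : ∃ ρ > 0, ∀ t ∈ Set.Icc (0:ℝ) 1, dist t t₀ < ρ →
      dist (f t) (f t₀) < δ / 2 := by
    have := (hf t₀ ht₀)
    rw [Metric.continuousWithinAt_iff] at this
    exact this (δ / 2) (by linarith)
  obtain ⟨ℓ, hℓ, hℓρ, hℓh⟩ : ∃ ℓ : ℝ, 0 < ℓ ∧ ℓ ≤ ρ/2 ∧ ℓ ≤ 1/2 :=
    ⟨min (ρ/2) (1/2), lt_min (by linarith) (by norm_num),
      min_le_left _ _, min_le_right _ _⟩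
  -- an analytic kernel concentrated at t₀, with controlled tails
  obtain ⟨g, E, G, hgsmooth, hgpos, hGpos, hEpos, hGg, hgE, hEsmall⟩ :
      ∃ (g : ℝ → ℝ) (E G : ℝ), ContDiff ℝ (⊤ : ℕ∞) g ∧ (∀ t, 0 < g t) ∧ 0 < G ∧ 0 < E ∧
        (∀ t, |t - t₀| ≤ ρ/2 → G ≤ g t) ∧ (∀ t, ρ ≤ |t - t₀| → g t ≤ E) ∧
        E ≤ (δ * ℓ / 4) * G := by
    set m : ℝ := δ * ℓ / 4 with hmdef
    have hm : 0 < m := by positivity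
    set k : ℝ := (4 / (3 * ρ^2)) * (1 + |Real.log m|) with hkdef
    have hk0 : 0 ≤ k := by positivity
    have hk1 : 3/4 * k * ρ^2 = 1 + |Real.log m| := by
      rw [hkdef]; field_simp
    have hm' : Real.exp (-(3/4 * k * ρ^2)) ≤ m := by
      rw [hk1]
      calc Real.exp (-(1 + |Real.log m|)) ≤ Real.exp (Real.log m) := by
            apply Real.exp_le_exp.mpr
            have := neg_abs_le (Real.log m)
            linarith
      _ = m := Real.exp_log hm
    refine ⟨fun t => Real.exp (-(k * (t - t₀)^2)), Real.exp (-(k * ρ^2)),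
      Real.exp (-(k * (ρ/2)^2)), ?_, fun t => Real.exp_pos _,
      Real.exp_pos _, Real.exp_pos _, ?_, ?_, ?_⟩
    · apply Real.contDiff_exp.comp
      apply ContDiff.neg
      exact (contDiff_const.mul ((contDiff_id.sub contDiff_const).pow 2))
    · intro t ht
      apply Real.exp_le_exp.mpr
      have h3 := sq_abs (t - t₀)
      have h1 : (t - t₀)^2 ≤ (ρ/2)^2 := by nlinarith [abs_nonneg (t - t₀)]
      nlinarith
    · intro t ht
      apply Real.exp_le_exp.mpr
      have h3 := sq_abs (t - t₀)
      have h1 : ρ^2 ≤ (t - t₀)^2 := by nlinarith [abs_nonneg (t - t₀)]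
      nlinarith
    · have h : -(k * ρ^2) = (-(3/4 * k * ρ^2)) + (-(k * (ρ/2)^2)) := by ring
      rw [h, Real.exp_add]
      exact mul_le_mul_of_nonneg_right hm' (Real.exp_pos _).le
  have hgcont : Continuous g := hgsmooth.continuous
  have hgint : IntervalIntegrable g volume 0 1 := hgcont.intervalIntegrable _ _
  -- the subinterval
  obtain ⟨a, b, h0a, hb1, hba, hclose⟩ :
      ∃ a b : ℝ, 0 ≤ a ∧ b ≤ 1 ∧ b - a = ℓ ∧
        ∀ t ∈ Set.Icc a b, |t - t₀| ≤ ρ/2 := by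
    rcases le_or_gt t₀ (1/2) with h | h
    · refine ⟨t₀, t₀ + ℓ, ht₀.1, by linarith, by ring, ?_⟩
      intro t ⟨h1, h2⟩
      rw [abs_le]; constructor <;> linarith
    · refine ⟨t₀ - ℓ, t₀, by linarith, ht₀.2, by ring, ?_⟩
      intro t ⟨h1, h2⟩
      rw [abs_le]; constructor <;> linarith
  have hab : a ≤ b := by linarith
  -- lower bound on the mass
  set A : ℝ := ∫ t in (0:ℝ)..1, g t with hAdef
  have hA_lb : ℓ * G ≤ A := by
    have h1 : ℓ * G = ∫ _ in a..b, G := by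
      rw [intervalIntegral.integral_const, smul_eq_mul, hba]
    have h2 : (∫ _ in a..b, G) ≤ ∫ t in a..b, g t := by
      apply intervalIntegral.integral_mono_on hab intervalIntegrable_const
        (hgcont.intervalIntegrable _ _)
      intro t ht
      exact hGg t (hclose t ht)
    have h3 : (∫ t in a..b, g t) ≤ A := by
      apply intervalIntegral.integral_mono_interval h0a hab hb1
        (Filter.Eventually.of_forall fun t => (hgpos t).le) hgint
    linarith
  have hApos : 0 < A := lt_of_lt_of_le (by positivity) hA_lb
  have hE4 : 2 * E ≤ (δ/2) * A := by nlinarith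
  -- the density
  set η : ℝ → ℝ := fun t => A⁻¹ * g t with hηdef
  have hηcont : Continuous η := continuous_const.mul hgcont
  have hηsmooth : ContDiff ℝ (⊤ : ℕ∞) η := contDiff_const.mul hgsmooth
  have hηpos : ∀ t ∈ Set.Icc (0:ℝ) 1, 0 < η t := by
    intro t _
    have := hgpos t
    positivity
  have hηone : (∫ t in (0:ℝ)..1, η t) = 1 := by
    rw [hηdef]
    rw [intervalIntegral.integral_const_mul, ← hAdef]
    field_simp
  have hfint : IntervalIntegrable (fun t => η t • f t) volume 0 1 := by
    apply ContinuousOn.intervalIntegrable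
    rw [huIcc]
    exact hηcont.continuousOn.smul hf
  refine ⟨∫ t in (0:ℝ)..1, η t • f t, ⟨η, hηsmooth, hηpos, hηone, rfl⟩, ?_⟩
  -- the estimate
  have hconst : (∫ t in (0:ℝ)..1, η t • f t₀) = f t₀ := by
    rw [intervalIntegral.integral_smul_const, hηone, one_smul]
  have hgint' : IntervalIntegrable (fun t => η t • f t₀) volume 0 1 := by
    apply ContinuousOn.intervalIntegrable
    rw [huIcc]
    exact hηcont.continuousOn.smul continuousOn_const
  have hkey : (∫ t in (0:ℝ)..1, η t • (f t - f t₀))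
      = (∫ t in (0:ℝ)..1, η t • f t) - f t₀ := by
    simp_rw [smul_sub]
    rw [intervalIntegral.integral_sub hfint hgint', hconst]
  rw [← hkey]
  have h1 : ‖∫ t in (0:ℝ)..1, η t • (f t - f t₀)‖
      ≤ ∫ t in (0:ℝ)..1, ‖η t • (f t - f t₀)‖ :=
    intervalIntegral.norm_integral_le_integral_norm zero_le_one
  have h2 : (∫ t in (0:ℝ)..1, ‖η t • (f t - f t₀)‖)
      ≤ ∫ t in (0:ℝ)..1, A⁻¹ * ((δ/2) * g t + 2 * E) := by
    apply intervalIntegral.integral_mono_on zero_le_one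
    · apply ContinuousOn.intervalIntegrable
      rw [huIcc]
      exact (hηcont.continuousOn.smul (hf.sub continuousOn_const)).norm
    · apply ContinuousOn.intervalIntegrable
      exact (continuous_const.mul
        ((continuous_const.mul hgcont).add continuous_const)).continuousOn
    · intro t ht
      have hd2 : ‖f t - f t₀‖ ≤ 2 := by
        calc ‖f t - f t₀‖ ≤ ‖f t‖ + ‖f t₀‖ := norm_sub_le _ _
        _ ≤ 2 := by linarith [hb t ht, hb t₀ ht₀]
      have hcore : g t * ‖f t - f t₀‖ ≤ (δ/2) * g t + 2 * E := by
        rcases lt_or_ge (dist t t₀) ρ with hcase | hcase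
        · have h3 : ‖f t - f t₀‖ ≤ δ/2 := by
            have := hmod t ht hcase
            rw [dist_eq_norm] at this
            linarith
          nlinarith [hgpos t, norm_nonneg (f t - f t₀)]
        · have h3 : g t ≤ E := by
            apply hgE t
            rw [Real.dist_eq] at hcase
            linarith
          nlinarith [hgpos t, norm_nonneg (f t - f t₀)]
      rw [norm_smul, Real.norm_eq_abs, hηdef]
      simp only
      rw [abs_mul, abs_of_nonneg (inv_nonneg.mpr hApos.le),
        abs_of_nonneg (hgpos t).le, mul_assoc]
      exact mul_le_mul_of_nonneg_left hcore (inv_nonneg.mpr hApos.le)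
  have h3 : (∫ t in (0:ℝ)..1, A⁻¹ * ((δ/2) * g t + 2 * E))
      = A⁻¹ * ((δ/2) * A + 2 * E) := by
    rw [intervalIntegral.integral_const_mul,
      intervalIntegral.integral_add (hgint.const_mul _) intervalIntegrable_const,
      intervalIntegral.integral_const_mul, ← hAdef, intervalIntegral.integral_const]
    simp
  have h4 : A⁻¹ * ((δ/2) * A + 2 * E) ≤ δ := by
    rw [inv_mul_le_iff₀ hApos]
    nlinarith
  linarith

lemma Sset_approx_hull (f : ℝ → E3) (hf : ContinuousOn f (Set.Icc 0 1))
    (hb : ∀ t ∈ Set.Icc (0:ℝ) 1, ‖f t‖ ≤ 1)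
    {p : E3} (hp : p ∈ convexHull ℝ (f '' Set.Icc 0 1)) {δ : ℝ} (hδ : 0 < δ) :
    ∃ x ∈ Sset f, ‖x - p‖ ≤ δ := by
  rw [convexHull_eq] at hp
  obtain ⟨ι, T, w, z, hw0, hw1, hz, hcm⟩ := hp
  have hzS : ∀ i ∈ T, ∃ x ∈ Sset f, ‖x - z i‖ ≤ δ := by
    intro i hi
    obtain ⟨t, ht, hft⟩ := hz i hi
    rw [← hft]
    exact Sset_approx_point f hf hb ht hδ
  choose x hxS hxd using hzS
  refine ⟨∑ i ∈ T.attach, w i • x i i.2, ?_, ?_⟩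
  · have hconv := Sset_convex f hf
    apply hconv.sum_mem (t := T.attach)
    · intro i _; exact hw0 i i.2
    · rw [Finset.sum_attach T w]; exact hw1
    · intro i _; exact hxS i i.2
  · have hpz : p = ∑ i ∈ T.attach, w i • z i := by
      rw [← hcm, Finset.centerMass_eq_of_sum_1 _ _ hw1]
      rw [← Finset.sum_attach T (fun i => w i • z i)]
    rw [hpz, ← Finset.sum_sub_distrib]
    have : ∀ i ∈ T.attach, w i • x i i.2 - w i • z i = w i • (x i i.2 - z i) := by
      intro i _; rw [smul_sub]
    rw [Finset.sum_congr rfl this]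
    calc ‖∑ i ∈ T.attach, w i • (x i i.2 - z i)‖
        ≤ ∑ i ∈ T.attach, ‖w i • (x i i.2 - z i)‖ := norm_sum_le _ _
      _ ≤ ∑ i ∈ T.attach, w i * δ := by
          apply Finset.sum_le_sum
          intro i _
          rw [norm_smul, Real.norm_eq_abs, abs_of_nonneg (hw0 i i.2)]
          exact mul_le_mul_of_nonneg_left (hxd i i.2) (hw0 i i.2)
      _ = δ := by
          rw [← Finset.sum_mul, Finset.sum_attach T w, hw1, one_mul]

lemma coord_abs_le_norm (x : E3) (j : Fin 3) : |x j| ≤ ‖x‖ := by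
  have h := abs_real_inner_le_norm (EuclideanSpace.single j (1:ℝ)) x
  rw [EuclideanSpace.inner_single_left, EuclideanSpace.norm_single] at h
  simpa using h

lemma decomp3 (x : E3) : x = ∑ j : Fin 3, x j • EuclideanSpace.single j (1:ℝ) := by
  ext i
  simp [EuclideanSpace.single_apply, Finset.sum_apply, Fin.sum_univ_three]
  fin_cases i <;> simp

lemma mem_hull_of_approx {γ : E3} {ε : ℝ} (hε : 0 < ε) (q : Fin 3 × Bool → E3)
    (hq : ∀ j : Fin 3, ∀ σ : Bool,
      ‖q (j, σ) - (γ + (if σ then ε/2 else -(ε/2)) • EuclideanSpace.single j (1:ℝ))‖ ≤ ε/16) :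
    γ ∈ convexHull ℝ (Set.range q) := by
  by_contra hK
  obtain ⟨L, u, hLK, hLγ⟩ := geometric_hahn_banach_closed_point
    (convex_convexHull ℝ _) ((Set.finite_range q).isClosed_convexHull (𝕜 := ℝ)) hK
  have hLq : ∀ j σ, L (q (j, σ)) < u := fun j σ =>
    hLK _ (subset_convexHull ℝ _ ⟨(j, σ), rfl⟩)
  have hLe : ∀ j : Fin 3, |L (EuclideanSpace.single j (1:ℝ))| ≤ ‖L‖ / 8 := by
    intro j
    have key : ∀ σ : Bool,
        L γ + (if σ then ε/2 else -(ε/2)) * L (EuclideanSpace.single j (1:ℝ))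
          < u + ‖L‖ * (ε/16) := by
      intro σ
      set p : E3 := γ + (if σ then ε/2 else -(ε/2)) • EuclideanSpace.single j (1:ℝ) with hp
      have h1 : L p = L γ + (if σ then ε/2 else -(ε/2)) * L (EuclideanSpace.single j (1:ℝ)) := by
        rw [hp, map_add, L.map_smul, smul_eq_mul]
      have h2 : L p - L (q (j, σ)) ≤ ‖L‖ * (ε/16) := by
        calc L p - L (q (j, σ)) = L (p - q (j, σ)) := by rw [map_sub]
        _ ≤ ‖L (p - q (j, σ))‖ := le_abs_self _
        _ ≤ ‖L‖ * ‖p - q (j, σ)‖ := L.le_opNorm _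
        _ ≤ ‖L‖ * (ε/16) := by
            apply mul_le_mul_of_nonneg_left _ (norm_nonneg L)
            rw [← norm_neg, neg_sub]
            exact hq j σ
      have h3 := hLq j σ
      linarith [h1 ▸ h2]
    have k1 := key true
    have k2 := key false
    norm_num at k1 k2
    set X := L (EuclideanSpace.single j (1:ℝ)) with hX
    have hX1 : ε * (X/2) < ε * (‖L‖/16) := by nlinarith
    have hX2 : ε * (-X/2) < ε * (‖L‖/16) := by nlinarith
    have e1 : X/2 < ‖L‖/16 := (mul_lt_mul_iff_right₀ hε).mp hX1
    have e2 : -X/2 < ‖L‖/16 := (mul_lt_mul_iff_right₀ hε).mp hX2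
    rw [abs_le]
    constructor <;> linarith
  have hnorm : ‖L‖ ≤ 3/8 * ‖L‖ := by
    apply ContinuousLinearMap.opNorm_le_bound
    · positivity
    · intro x
      have hxd := decomp3 x
      have h1 : L x = ∑ j : Fin 3, x j * L (EuclideanSpace.single j (1:ℝ)) := by
        conv_lhs => rw [hxd]
        rw [map_sum]
        congr 1; ext j; rw [L.map_smul, smul_eq_mul]
      rw [Real.norm_eq_abs, h1]
      calc |∑ j : Fin 3, x j * L (EuclideanSpace.single j (1:ℝ))|
          ≤ ∑ j : Fin 3, |x j * L (EuclideanSpace.single j (1:ℝ))| :=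
            Finset.abs_sum_le_sum_abs _ _
        _ ≤ ∑ _j : Fin 3, ‖x‖ * (‖L‖/8) := by
            apply Finset.sum_le_sum
            intro j _
            rw [abs_mul]
            exact mul_le_mul (coord_abs_le_norm x j) (hLe j)
              (abs_nonneg _) (norm_nonneg x)
        _ = 3/8 * ‖L‖ * ‖x‖ := by
            rw [Finset.sum_const]
            simp [Finset.card_univ]
            ring
  have hL0 : ‖L‖ = 0 := by linarith [norm_nonneg L]
  have hLzero : L = 0 := by
    ext x
    have := L.le_opNorm x
    rw [hL0, zero_mul] at this
    simpa [norm_le_zero_iff] using this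
  have h1 := hLq 0 true
  rw [hLzero] at h1 hLγ
  simp at h1 hLγ
  linarith

/-- For `r ∈ C⁰([0,1], SO(3))` and `γ̄` in the interior of the convex hull of
`r₁([0,1])`, there is a positive `η ∈ C^∞([0,1])` with `∫₀¹ η = 1` and `∫₀¹ η r₁ = γ̄`. -/
theorem statement1
    (r : ℝ → Matrix (Fin 3) (Fin 3) ℝ)
    (hcont : ContinuousOn r (Set.Icc 0 1))
    (hSO : ∀ t ∈ Set.Icc (0:ℝ) 1, r t ∈ SO3)
    (γbar : E3)
    (hγ : γbar ∈ interior (convexHull ℝ ((fun t => row3 (r t) 0) '' Set.Icc 0 1))) :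
    ∃ η : ℝ → ℝ, ContDiff ℝ (⊤ : ℕ∞) η ∧ (∀ t ∈ Set.Icc (0:ℝ) 1, 0 < η t) ∧
      (∫ t in (0:ℝ)..1, η t) = 1 ∧ (∫ t in (0:ℝ)..1, η t • row3 (r t) 0) = γbar := by
  set f : ℝ → E3 := fun t => row3 (r t) 0 with hfdef
  have hf : ContinuousOn f (Set.Icc 0 1) := by
    have hrow : Continuous fun M : Matrix (Fin 3) (Fin 3) ℝ => row3 M 0 := by
      unfold row3
      exact (PiLp.continuous_toLp 2 (fun _ : Fin 3 => ℝ)).comp (continuous_apply 0)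
    exact hrow.comp_continuousOn hcont
  have hb : ∀ t ∈ Set.Icc (0:ℝ) 1, ‖f t‖ ≤ 1 := by
    intro t ht
    have h := (hSO t ht).1
    have h00 : ∑ k, r t 0 k * r t 0 k = 1 := by
      have h2 := congrArg (fun M => M 0 0) h
      simpa [Matrix.mul_apply, Matrix.transpose_apply, Matrix.one_apply] using h2
    have hnorm : ‖f t‖ = 1 := by
      rw [hfdef]
      simp only [row3]
      rw [EuclideanSpace.norm_eq]
      have : ∀ i : Fin 3, ‖(WithLp.equiv 2 (Fin 3 → ℝ)).symm (r t 0) i‖ ^ 2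
          = r t 0 i * r t 0 i := by
        intro i
        rw [WithLp.equiv_symm_apply, PiLp.toLp_apply, Real.norm_eq_abs, sq_abs, sq]
      rw [Finset.sum_congr rfl (fun i _ => this i), h00, Real.sqrt_one]
    linarith [hnorm.le]
  obtain ⟨ε, hε, hball⟩ : ∃ ε > 0, Metric.ball γbar ε ⊆
      convexHull ℝ (f '' Set.Icc 0 1) :=
    Metric.mem_nhds_iff.mp (mem_interior_iff_mem_nhds.mp hγ)
  have hq : ∀ j : Fin 3, ∀ σ : Bool, ∃ x ∈ Sset f,
      ‖x - (γbar + (if σ then ε/2 else -(ε/2)) • EuclideanSpace.single j (1:ℝ))‖ ≤ ε/16 := by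
    intro j σ
    apply Sset_approx_hull f hf hb _ (by positivity : (0:ℝ) < ε/16)
    apply hball
    rw [Metric.mem_ball, dist_eq_norm, add_sub_cancel_left, norm_smul,
      EuclideanSpace.norm_single]
    rcases σ with _ | _ <;> simp <;> [skip; skip] <;>
      rw [abs_of_pos (by linarith)] <;> linarith
  choose q hqS hqd using hq
  have hγS : γbar ∈ Sset f := by
    have hmem := mem_hull_of_approx hε (fun jσ : Fin 3 × Bool => q jσ.1 jσ.2)
      (fun j σ => hqd j σ)
    refine convexHull_min ?_ (Sset_convex f hf) hmem
    rintro x ⟨⟨j, σ⟩, rfl⟩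
    exact hqS j σ
  obtain ⟨η, h1, h2, h3, h4⟩ := hγS
  exact ⟨η, h1, h2, h3, h4⟩
end
end

section
/- Let p ∈ [1, ∞], let β ∈ W^{1,p}(I, S²), and let v ∈ ℝ³ satisfy v · β(0) = 0. Then the map t ↦ Π_{β|_(0,t)} v belongs to W^{1,p}(I, ℝ³). -/
/-!
The transport equation says that `V` is absolutely continuous with `V' = -⟪V, β'⟫ β`. Both `V` and
`β` are continuous on `[0,1]`, hence bounded, so `|V'| ≤ C |β'|` and `V'` inherits the `Lᵖ` bound
of `β'` (Hölder with exponents `∞` and `p`).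
-/

open MeasureTheory Set Filter Matrix
open scoped RealInnerProductSpace Topology ENNReal NNReal

noncomputable section

theorem FTCOn.continuousOn {f f' : ℝ → E3} {a b : ℝ} (hab : a ≤ b) (h : FTCOn f f' a b) :
    ContinuousOn f (Icc a b) := by
  have hprim := intervalIntegral.continuousOn_primitive_interval' h.1 left_mem_uIcc
  rw [uIcc_of_le hab] at hprim
  exact (continuousOn_const.add hprim).congr h.2

theorem IsParTrans.ftcOn {β β' V : ℝ → E3} {a b : ℝ} {v : E3} (h : IsParTrans β β' a b v V) :
    FTCOn V (fun s => -(⟪V s, β' s⟫ • β s)) a b := by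
  obtain ⟨hVa, hint, hV⟩ := h
  refine ⟨hint.neg, fun t ht => ?_⟩
  rw [hV t ht, hVa, intervalIntegral.integral_neg, sub_eq_add_neg]

theorem ContinuousOn.memLp_top_restrict {α F : Type*} [TopologicalSpace α] [MeasurableSpace α]
    [OpensMeasurableSpace α] [NormedAddCommGroup F] [SecondCountableTopology F]
    {μ : Measure α} {f : α → F} {s t : Set α} (hf : ContinuousOn f s) (hs : IsCompact s)
    (ht : MeasurableSet t) (hts : t ⊆ s) : MemLp f ∞ (μ.restrict t) := by
  obtain ⟨C, hC⟩ := hs.exists_bound_of_continuousOn hf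
  exact memLp_top_of_bound ((hf.mono hts).aestronglyMeasurable ht) C
    (ae_restrict_of_forall_mem ht fun x hx => hC x (hts hx))

theorem MemLp.inner_smul {α F : Type*} [MeasurableSpace α] [NormedAddCommGroup F]
    [InnerProductSpace ℝ F] {μ : Measure α} {p : ℝ≥0∞} {f g h : α → F}
    (hf : MemLp f ∞ μ) (hg : MemLp g p μ) (hh : MemLp h ∞ μ) :
    MemLp (fun x => ⟪f x, g x⟫ • h x) p μ := by
  have hinner : MemLp (fun x => ⟪f x, g x⟫) p μ :=
    hf.of_bilin (fun u w => ⟪u, w⟫) 1 hg (hf.1.inner hg.1)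
      (ae_of_all _ fun x => by simpa using nnnorm_inner_le_nnnorm (𝕜 := ℝ) (f x) (g x))
  exact hh.smul hinner

theorem statement3_general
    (p : ℝ≥0∞)
    (β β' : ℝ → E3)
    (hβ : FTCOn β β' 0 1)
    (hLp : MemLp β' p muI)
    (v : E3)
    (V : ℝ → E3) (hV : IsParTrans β β' 0 1 v V) :
    ∃ V' : ℝ → E3, FTCOn V V' 0 1 ∧ MemLp V' p muI := by
  have hV' := hV.ftcOn
  refine ⟨_, hV', ?_⟩
  have bounded : ∀ {f f' : ℝ → E3}, FTCOn f f' 0 1 → MemLp f ∞ muI := fun hf =>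
    (hf.continuousOn zero_le_one).memLp_top_restrict isCompact_Icc measurableSet_Ioo
      Ioo_subset_Icc_self
  exact (MemLp.inner_smul (bounded hV') hLp (bounded hβ)).neg

/-- If `β ∈ W^{1,p}(I, S²)` and `v · β(0) = 0`, then the parallel transport
`t ↦ Π_{β|_(0,t)} v` belongs to `W^{1,p}(I, ℝ³)`. -/
theorem statement3
    (p : ℝ≥0∞) (hp : 1 ≤ p)
    (β β' : ℝ → E3)
    (hβ : FTCOn β β' 0 1)
    (hsphere : ∀ t ∈ Set.Icc (0:ℝ) 1, ‖β t‖ = 1)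
    (hLp : MemLp β' p muI)
    (v : E3) (hv : ⟪v, β 0⟫ = 0)
    (V : ℝ → E3) (hV : IsParTrans β β' 0 1 v V) :
    ∃ V' : ℝ → E3, FTCOn V V' 0 1 ∧ MemLp V' p muI :=
  statement3_general p β β' hβ hLp v V hV
end
end

section
/- Let β ∈ W^{1,1}(I, S²) and let r ∈ L^∞(I, SO(3)) be an adapted frame for β, with rows r₁, r₂, r₃. Then: (i) β' = (β' · r₁) r₁ almost everywhere on I, and r₁ = ±β'/|β'| almost everywhere on {β' ≠ 0}; (ii) r₃ ∈ W^{1,1}(I) and r₃' · r₂ = 0 almost everywhere on I; (iii) if moreover r is continuous on I and r̃ ∈ C⁰(I, SO(3)) is another adapted frame for β, then for every t in I ∖ C_β one has r̃₁(t) = r₁(t) or r̃₁(t) = −r₁(t), where C_β = {t ∈ I : β is constant in a neighbourhood of t}. -/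
open MeasureTheory Set Filter Matrix
open scoped RealInnerProductSpace Topology ENNReal NNReal

noncomputable section

/-!
Since `r₁` is a unit vector and `β' × r₁ = 0`, the derivative `β'` is a multiple of `r₁`; this is
(i), and (ii) follows because `r₂ ⟂ r₁`. For (iii): wherever `β' ≠ 0`, both `r₁` and `r̃₁` equal
`±β'/|β'|`. If `β` is not constant near `t`, then, `β` being the integral of `β'`, such points
(outside the null set where the frames misbehave) accumulate at `t`; the relation `r̃₁ = ±r₁` is
closed, so it passes to `t` by continuity of both frames.
-/

lemma cross3_eq_toLp_crossProduct (v w : E3) :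
    cross3 v w = WithLp.toLp 2 (WithLp.ofLp v ⨯₃ WithLp.ofLp w) := by
  ext i
  fin_cases i <;> simp [cross3, cross_apply]

lemma eq_inner_smul_of_cross3_eq_zero {v w : E3} (hw : ‖w‖ = 1) (h : cross3 v w = 0) :
    v = ⟪v, w⟫ • w := by
  have hvw : WithLp.ofLp v ⨯₃ WithLp.ofLp w = 0 := by
    simpa [cross3_eq_toLp_crossProduct] using h
  have key := cross_cross_eq_smul_sub_smul' (WithLp.ofLp w) (WithLp.ofLp v) (WithLp.ofLp w)
  have hdot : ∀ x y : E3, WithLp.ofLp x ⬝ᵥ WithLp.ofLp y = ⟪y, x⟫ := fun x y => by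
    simp [EuclideanSpace.inner_eq_star_dotProduct]
  rw [hvw, map_zero, eq_comm, sub_eq_zero, hdot, hdot, real_inner_self_eq_norm_sq, hw, one_pow,
    one_smul, real_inner_comm] at key
  exact WithLp.ofLp_injective 2 key

lemma eq_or_eq_neg_normalize_of_eq_inner_smul {F : Type*} [NormedAddCommGroup F]
    [InnerProductSpace ℝ F] {u v : F} (hu : ‖u‖ = 1) (hv : v ≠ 0) (h : v = ⟪v, u⟫ • u) :
    u = ‖v‖⁻¹ • v ∨ u = -(‖v‖⁻¹ • v) := by
  set c := ⟪v, u⟫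
  have hc : c ≠ 0 := fun hc => hv (by rw [h, hc, zero_smul])
  have hnorm : ‖v‖ = |c| := by rw [h, norm_smul, hu, Real.norm_eq_abs, mul_one]
  rw [hnorm, h, smul_smul]
  rcases hc.lt_or_gt with hneg | hpos
  · right
    rw [abs_of_neg hneg, inv_neg, neg_mul, inv_mul_cancel₀ hc, neg_smul, one_smul, neg_neg]
  · left
    rw [abs_of_pos hpos, inv_mul_cancel₀ hc, one_smul]

lemma eq_or_eq_neg_of_cross3_eq_zero {v u w : E3} (hv : v ≠ 0) (hu : ‖u‖ = 1) (hw : ‖w‖ = 1)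
    (hvu : cross3 v u = 0) (hvw : cross3 v w = 0) : u = w ∨ u = -w := by
  rcases eq_or_eq_neg_normalize_of_eq_inner_smul hu hv (eq_inner_smul_of_cross3_eq_zero hu hvu)
    with rfl | rfl <;>
  rcases eq_or_eq_neg_normalize_of_eq_inner_smul hw hv (eq_inner_smul_of_cross3_eq_zero hw hvw)
    with rfl | rfl <;> simp

lemma inner_row3_of_mem_SO3 {M : Matrix (Fin 3) (Fin 3) ℝ} (hM : M ∈ SO3) (i j : Fin 3) :
    ⟪row3 M i, row3 M j⟫ = (1 : Matrix (Fin 3) (Fin 3) ℝ) i j := by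
  rw [← hM.1]
  simp [row3, PiLp.inner_apply, Matrix.mul_apply, mul_comm]

lemma norm_row3_of_mem_SO3 {M : Matrix (Fin 3) (Fin 3) ℝ} (hM : M ∈ SO3) (i : Fin 3) :
    ‖row3 M i‖ = 1 := by
  have h := inner_row3_of_mem_SO3 hM i i
  rwa [real_inner_self_eq_norm_sq, one_apply_eq,
    pow_eq_one_iff_of_nonneg (norm_nonneg _) two_ne_zero] at h

lemma continuous_row3 (i : Fin 3) : Continuous fun M : Matrix (Fin 3) (Fin 3) ℝ => row3 M i :=
  (PiLp.continuous_toLp 2 _).comp (continuous_apply i)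

lemma FTCOn.sub_eq_integral {f f' : ℝ → E3} {a b : ℝ} (hf : FTCOn f f' a b) {s t : ℝ}
    (hs : s ∈ Icc a b) (ht : t ∈ Icc a b) : f s - f t = ∫ x in t..s, f' x := by
  have hint : ∀ x ∈ Icc a b, IntervalIntegrable f' volume a x := fun x hx =>
    hf.1.mono_set (uIcc_subset_uIcc left_mem_uIcc (mem_uIcc_of_le hx.1 hx.2))
  rw [hf.2 s hs, hf.2 t ht, add_sub_add_left_eq_sub]
  exact intervalIntegral.integral_interval_sub_left (hint s hs) (hint t ht)

lemma FTCOn.mem_closure_of_not_locally_const {f f' : ℝ → E3} {a b : ℝ} (hf : FTCOn f f' a b)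
    {P : ℝ → Prop} (hP : ∀ᵐ s ∂volume.restrict (Ioo a b), P s) {t : ℝ} (ht : t ∈ Ioo a b)
    (hnc : ¬ ∃ ε > (0:ℝ), ∀ s ∈ Ioo a b, |s - t| < ε → f s = f t) :
    t ∈ closure {s | s ∈ Ioo a b ∧ f' s ≠ 0 ∧ P s} := by
  rw [Metric.mem_closure_iff]
  intro ε hε
  by_contra! hfar
  refine hnc ⟨ε, hε, fun s hs hst => ?_⟩
  rw [← sub_eq_zero, hf.sub_eq_integral (Ioo_subset_Icc_self hs) (Ioo_subset_Icc_self ht)]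
  refine intervalIntegral.integral_zero_ae ?_
  rw [ae_restrict_iff' measurableSet_Ioo] at hP
  filter_upwards [hP] with x hPx hx
  have hx' : x ∈ uIcc t s := uIoc_subset_uIcc hx
  have hxI : x ∈ Ioo a b := ordConnected_Ioo.uIcc_subset ht hs hx'
  have hxt : dist t x < ε := by
    rw [dist_comm, Real.dist_eq]
    exact (abs_sub_left_of_mem_uIcc hx').trans_lt hst
  by_contra hx0
  exact (hfar x ⟨hxI, hx0, hPx hxI⟩).not_gt hxt

lemma ContinuousOn.eq_or_eq_neg_of_mem_closure {X F : Type*} [TopologicalSpace X]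
    [TopologicalSpace F] [T2Space F] [AddGroup F] [ContinuousNeg F] {f g : X → F} {U S : Set X}
    (hf : ContinuousOn f U) (hg : ContinuousOn g U) (hSU : S ⊆ U)
    (hfg : ∀ s ∈ S, f s = g s ∨ f s = -g s) {t : X} (htU : t ∈ U) (ht : t ∈ closure S) :
    f t = g t ∨ f t = -g t := by
  let C : Set (F × F) := {p | p.1 = p.2 ∨ p.1 = -p.2}
  have hC : IsClosed C :=
    (isClosed_eq continuous_fst continuous_snd).union
      (isClosed_eq continuous_fst continuous_snd.neg)
  have hmaps : MapsTo (fun s => (f s, g s)) S C := hfg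
  simpa [hC.closure_eq, C] using (((hf.prodMk hg) t htU).mono hSU).mem_closure ht hmaps

theorem statement5_general
    (β β' : ℝ → E3) (hβ : FTCOn β β' 0 1)
    (r : ℝ → Matrix (Fin 3) (Fin 3) ℝ)
    (hSO : ∀ᵐ t ∂muI, r t ∈ SO3)
    (h1 : ∀ᵐ t ∂muI, cross3 (β' t) (row3 (r t) 0) = 0) :
    (∀ᵐ t ∂muI, β' t = ⟪β' t, row3 (r t) 0⟫ • row3 (r t) 0) ∧
    (∀ᵐ t ∂muI, β' t ≠ 0 →
      (row3 (r t) 0 = ‖β' t‖⁻¹ • β' t ∨ row3 (r t) 0 = -(‖β' t‖⁻¹ • β' t))) ∧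
    (∀ᵐ t ∂muI, ⟪β' t, row3 (r t) 1⟫ = 0) ∧
    (∀ rt : ℝ → Matrix (Fin 3) (Fin 3) ℝ,
      ContinuousOn r (Set.Ioo 0 1) → ContinuousOn rt (Set.Ioo 0 1) →
      (∀ᵐ t ∂muI, rt t ∈ SO3) →
      (∀ᵐ t ∂muI, row3 (rt t) 2 = β t) →
      (∀ᵐ t ∂muI, cross3 (β' t) (row3 (rt t) 0) = 0) →
      ∀ t ∈ Set.Ioo (0:ℝ) 1,
        (¬ ∃ ε > (0:ℝ), ∀ s ∈ Set.Ioo (0:ℝ) 1, |s - t| < ε → β s = β t) →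
        (row3 (rt t) 0 = row3 (r t) 0 ∨ row3 (rt t) 0 = - row3 (r t) 0)) := by
  have hpar : ∀ᵐ t ∂muI, β' t = ⟪β' t, row3 (r t) 0⟫ • row3 (r t) 0 := by
    filter_upwards [hSO, h1] with t hSOt h1t
    exact eq_inner_smul_of_cross3_eq_zero (norm_row3_of_mem_SO3 hSOt 0) h1t
  refine ⟨hpar, ?_, ?_, ?_⟩
  · filter_upwards [hSO, hpar] with t hSOt hpart hne
    exact eq_or_eq_neg_normalize_of_eq_inner_smul (norm_row3_of_mem_SO3 hSOt 0) hne hpart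
  · filter_upwards [hSO, hpar] with t hSOt hpart
    rw [hpart, real_inner_smul_left, inner_row3_of_mem_SO3 hSOt]
    simp
  · intro rt hr hrt hSOt _ h1t t ht hnc
    refine ((continuous_row3 0).comp_continuousOn hrt).eq_or_eq_neg_of_mem_closure
      ((continuous_row3 0).comp_continuousOn hr) (fun s hs => hs.1) ?_ ht
      (hβ.mem_closure_of_not_locally_const (hSO.and (hSOt.and (h1.and h1t))) ht hnc)
    rintro s ⟨-, hs0, hSOs, hSOts, hc, hct⟩
    exact eq_or_eq_neg_of_cross3_eq_zero hs0 (norm_row3_of_mem_SO3 hSOts 0)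
      (norm_row3_of_mem_SO3 hSOs 0) hct hc

/-- Properties of adapted frames (`r₃ = β` a.e., `β' × r₁ = 0` a.e.) of a curve
`β ∈ W^{1,1}(I, S²)`: (i) `β' = (β'·r₁) r₁` a.e. and `r₁ = ±β'/|β'|` a.e. on `{β' ≠ 0}`;
(ii) `r₃' · r₂ = 0` a.e. (with `r₃' = β'` a.e.); (iii) two continuous adapted frames have equal
first rows up to sign away from the set `C_β` where `β` is locally constant. -/
theorem statement5
    (β β' : ℝ → E3) (hβ : FTCOn β β' 0 1)
    (hsphere : ∀ t ∈ Set.Icc (0:ℝ) 1, ‖β t‖ = 1)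
    (r : ℝ → Matrix (Fin 3) (Fin 3) ℝ)
    (hrmeas : AEStronglyMeasurable r muI)
    (hSO : ∀ᵐ t ∂muI, r t ∈ SO3)
    (h3 : ∀ᵐ t ∂muI, row3 (r t) 2 = β t)
    (h1 : ∀ᵐ t ∂muI, cross3 (β' t) (row3 (r t) 0) = 0) :
    (∀ᵐ t ∂muI, β' t = ⟪β' t, row3 (r t) 0⟫ • row3 (r t) 0) ∧
    (∀ᵐ t ∂muI, β' t ≠ 0 →
      (row3 (r t) 0 = ‖β' t‖⁻¹ • β' t ∨ row3 (r t) 0 = -(‖β' t‖⁻¹ • β' t))) ∧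
    (∀ᵐ t ∂muI, ⟪β' t, row3 (r t) 1⟫ = 0) ∧
    (∀ rt : ℝ → Matrix (Fin 3) (Fin 3) ℝ,
      ContinuousOn r (Set.Ioo 0 1) → ContinuousOn rt (Set.Ioo 0 1) →
      (∀ᵐ t ∂muI, rt t ∈ SO3) →
      (∀ᵐ t ∂muI, row3 (rt t) 2 = β t) →
      (∀ᵐ t ∂muI, cross3 (β' t) (row3 (rt t) 0) = 0) →
      ∀ t ∈ Set.Ioo (0:ℝ) 1,
        (¬ ∃ ε > (0:ℝ), ∀ s ∈ Set.Ioo (0:ℝ) 1, |s - t| < ε → β s = β t) →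
        (row3 (rt t) 0 = row3 (r t) 0 ∨ row3 (rt t) 0 = - row3 (r t) 0)) :=
  statement5_general β β' hβ r hSO h1
end
end

section
/- Let β ∈ W^{1,1}(I, S²) and assume that for every t₀ ∈ [0,1] there exists ε > 0 such that the restriction of β to [0,1] ∩ (t₀ − ε, t₀ + ε) has bounded geodesic curvature. Then β has bounded geodesic curvature on I. -/
open MeasureTheory Set Filter Matrix
open scoped RealInnerProductSpace Topology ENNReal NNReal

noncomputable section

/-- An adapted frame of class `W^{1,1}` for the spherical curve `β` (with derivative `β'`)
on `[a,b]`: a map `r : [a,b] → SO(3)` whose rows are in `W^{1,1}` (with derivatives `ρ' i`),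
with `r₃ = β` a.e. and `β' × r₁ = 0` a.e. on `(a,b)`. -/
def AdaptedFrameW11 (β β' : ℝ → E3) (a b : ℝ)
    (r : ℝ → Matrix (Fin 3) (Fin 3) ℝ) (ρ' : Fin 3 → ℝ → E3) : Prop :=
  (∀ i : Fin 3, FTCOn (fun t => row3 (r t) i) (ρ' i) a b) ∧
  (∀ t ∈ Set.Icc a b, r t ∈ SO3) ∧
  (∀ᵐ t ∂(volume.restrict (Set.Ioo a b)), row3 (r t) 2 = β t) ∧
  (∀ᵐ t ∂(volume.restrict (Set.Ioo a b)), cross3 (β' t) (row3 (r t) 0) = 0)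

/-- The spherical curve `β` has geodesic curvature `κ` on `[a,b]`: some `W^{1,1}` adapted
frame satisfies `r₁' · r₂ = κ` a.e. -/
def HasGeodCurvOn (β β' : ℝ → E3) (κ : ℝ → ℝ) (a b : ℝ) : Prop :=
  ∃ r ρ', AdaptedFrameW11 β β' a b r ρ' ∧
    ∀ᵐ t ∂(volume.restrict (Set.Ioo a b)), ⟪ρ' 0 t, row3 (r t) 1⟫ = κ t

/-- The spherical curve `β` has bounded geodesic curvature on `[a,b]`. -/
def BddGeodCurvOn (β β' : ℝ → E3) (a b : ℝ) : Prop :=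
  ∃ κ C, (∀ᵐ t ∂(volume.restrict (Set.Ioo a b)), |κ t| ≤ C) ∧ HasGeodCurvOn β β' κ a b

/-!
Bounded geodesic curvature glues along overlapping intervals, and a supremum argument over
`[0,1]` turns the local hypothesis into the global statement.

To glue adapted frames `r` on `[a,c]` and `r₂` on `[b,d]` with `b < c`: if `β'` is not a.e. zero
on `(b,c)`, there is `s ∈ (b,c)` with `β' s ≠ 0` at which both first rows are parallel to `β' s`;
then `r s` and `r₂ s` agree up to the half-turn `rotZ π` about `β s`, which preserves adaptedness
and curvature, so the frames can be concatenated at `s`. If `β' = 0` a.e. on `(b,c)`, then `β` is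
constant there, adaptedness only asks `r₃ = β`, and a rotation about `β` at constant angular speed
joins `r b` to `r₂ c` with constant curvature.
-/

open Real

lemma E3.inner_eq (x y : E3) : ⟪x, y⟫ = x 0 * y 0 + x 1 * y 1 + x 2 * y 2 := by
  simp only [PiLp.inner_apply, Fin.sum_univ_three, RCLike.inner_apply, conj_trivial]
  ring

lemma cross3_apply (v w : E3) (i : Fin 3) : cross3 v w i =
    ![v 1 * w 2 - v 2 * w 1, v 2 * w 0 - v 0 * w 2, v 0 * w 1 - v 1 * w 0] i := rfl

lemma cross3_zero_left (w : E3) : cross3 0 w = 0 :=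
  PiLp.ext fun i => by fin_cases i <;> simp [cross3_apply]

lemma cross3_neg_right (v w : E3) : cross3 v (-w) = -cross3 v w :=
  PiLp.ext fun i => by fin_cases i <;> simp [cross3_apply] <;> ring

lemma cross3_cross3_self (u w : E3) : cross3 u (cross3 u w) = ⟪u, w⟫ • u - ⟪u, u⟫ • w :=
  PiLp.ext fun i => by
    rw [E3.inner_eq, E3.inner_eq]
    fin_cases i <;> simp [cross3_apply] <;> ring

lemma exists_eq_smul_of_cross3_eq_zero {v w : E3} (hv : v ≠ 0) (h : cross3 v w = 0) :
    ∃ c : ℝ, w = c • v := by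
  have hzero : cross3 v 0 = 0 := PiLp.ext fun i => by fin_cases i <;> simp [cross3_apply]
  have hlag : ⟪v, w⟫ • v - ⟪v, v⟫ • w = 0 := by rw [← cross3_cross3_self, h, hzero]
  refine ⟨⟪v, w⟫ / ⟪v, v⟫, ?_⟩
  rw [div_eq_inv_mul, mul_smul, eq_inv_smul_iff₀ (inner_self_ne_zero.mpr hv)]
  exact (sub_eq_zero.mp hlag).symm

lemma eq_or_eq_neg_of_cross3_eq_zero_s6 {v w₁ w₂ : E3} (hv : v ≠ 0) (h₁ : cross3 v w₁ = 0)
    (h₂ : cross3 v w₂ = 0) (hw₁ : ‖w₁‖ = 1) (hw₂ : ‖w₂‖ = 1) : w₁ = w₂ ∨ w₁ = -w₂ := by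
  obtain ⟨c₁, rfl⟩ := exists_eq_smul_of_cross3_eq_zero hv h₁
  obtain ⟨c₂, rfl⟩ := exists_eq_smul_of_cross3_eq_zero hv h₂
  rw [norm_smul, Real.norm_eq_abs] at hw₁ hw₂
  have habs : |c₁| = |c₂| := mul_right_cancel₀ (norm_ne_zero_iff.mpr hv) (hw₁.trans hw₂.symm)
  rcases abs_eq_abs.mp habs with h | h
  · exact Or.inl (by rw [h])
  · exact Or.inr (by rw [h, neg_smul])

lemma exists_cos_eq_and_sin_eq {c s : ℝ} (h : c ^ 2 + s ^ 2 = 1) :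
    ∃ ψ : ℝ, cos ψ = c ∧ sin ψ = s := by
  set z : ℂ := ⟨c, s⟩
  have hz : ‖z‖ = 1 := by
    rw [Complex.norm_def, Complex.normSq_mk, Real.sqrt_eq_one]
    linear_combination h
  refine ⟨Complex.arg z, ?_, ?_⟩
  · simpa [hz] using Complex.norm_mul_cos_arg z
  · simpa [hz] using Complex.norm_mul_sin_arg z

lemma row3_apply (M : Matrix (Fin 3) (Fin 3) ℝ) (i j : Fin 3) : row3 M i j = M i j := rfl

lemma Matrix.ext_row3 {M N : Matrix (Fin 3) (Fin 3) ℝ} (h : ∀ i, row3 M i = row3 N i) :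
    M = N :=
  Matrix.ext fun i j => congrArg (· j) (h i)

namespace SO3

variable {M N : Matrix (Fin 3) (Fin 3) ℝ}

lemma transpose_mul_self (h : M ∈ SO3) : Mᵀ * M = 1 := mul_eq_one_comm.mp h.1

lemma mul_mem (hM : M ∈ SO3) (hN : N ∈ SO3) : M * N ∈ SO3 := by
  constructor
  · rw [Matrix.transpose_mul, ← Matrix.mul_assoc, Matrix.mul_assoc M, hN.1, Matrix.mul_one, hM.1]
  · rw [Matrix.det_mul, hM.2, hN.2, mul_one]

lemma inner_row3 (h : M ∈ SO3) (i j : Fin 3) :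
    ⟪row3 M i, row3 M j⟫ = if i = j then 1 else 0 := by
  have := congrFun (congrFun h.1 i) j
  simp only [Matrix.mul_apply, Matrix.transpose_apply, Matrix.one_apply,
    Fin.sum_univ_three] at this
  rw [E3.inner_eq, ← this]
  rfl

lemma norm_row3 (h : M ∈ SO3) (i : Fin 3) : ‖row3 M i‖ = 1 := by
  rw [norm_eq_sqrt_real_inner, inner_row3 h, if_pos rfl, Real.sqrt_one]

lemma row3_one_eq_cross3 (h : M ∈ SO3) : row3 M 1 = cross3 (row3 M 2) (row3 M 0) := by
  have hadj : Mᵀ = Matrix.adjugate M := by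
    calc Mᵀ = Mᵀ * (M * Matrix.adjugate M) := by
          rw [Matrix.mul_adjugate, h.2, one_smul, Matrix.mul_one]
      _ = Matrix.adjugate M := by rw [← Matrix.mul_assoc, transpose_mul_self h, Matrix.one_mul]
  rw [Matrix.adjugate_fin_three] at hadj
  refine PiLp.ext fun j => ?_
  have := congrFun (congrFun hadj j) 1
  fin_cases j <;> simp [cross3_apply, row3_apply] at this ⊢ <;> linear_combination this

lemma eq_sum_inner_smul (h : M ∈ SO3) (v : E3) :
    v = ⟪v, row3 M 0⟫ • row3 M 0 + ⟪v, row3 M 1⟫ • row3 M 1 + ⟪v, row3 M 2⟫ • row3 M 2 := by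
  have := congrArg (· *ᵥ WithLp.ofLp v) (transpose_mul_self h)
  refine PiLp.ext fun k => ?_
  have hk := congrFun this k
  simp only [← Matrix.mulVec_mulVec, Matrix.one_mulVec] at hk
  simp only [Matrix.mulVec, dotProduct, Fin.sum_univ_three, Matrix.transpose_apply] at hk
  simp only [E3.inner_eq, PiLp.add_apply, PiLp.smul_apply, smul_eq_mul, row3_apply]
  linear_combination -hk

lemma ext_of_row3 (hM : M ∈ SO3) (hN : N ∈ SO3) (h₀ : row3 M 0 = row3 N 0)
    (h₂ : row3 M 2 = row3 N 2) : M = N :=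
  Matrix.ext_row3 fun i => by
    fin_cases i
    · exact h₀
    · simp only [Fin.mk_one, row3_one_eq_cross3 hM, row3_one_eq_cross3 hN, h₀, h₂]
    · exact h₂

end SO3

def rotZ (ψ : ℝ) : Matrix (Fin 3) (Fin 3) ℝ :=
  !![cos ψ, sin ψ, 0; -sin ψ, cos ψ, 0; 0, 0, 1]

lemma rotZ_zero : rotZ 0 = 1 := by
  ext i j
  fin_cases i <;> fin_cases j <;> simp [rotZ]

lemma rotZ_mem (ψ : ℝ) : rotZ ψ ∈ SO3 := by
  have := Real.sin_sq_add_cos_sq ψ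
  constructor
  · ext i j
    simp only [Matrix.mul_apply, Matrix.transpose_apply, Fin.sum_univ_three]
    fin_cases i <;> fin_cases j <;> simp [rotZ] <;> linarith
  · simp [rotZ, Matrix.det_fin_three]
    linear_combination this

lemma row3_rotZ_mul (ψ : ℝ) (P : Matrix (Fin 3) (Fin 3) ℝ) :
    row3 (rotZ ψ * P) 0 = cos ψ • row3 P 0 + sin ψ • row3 P 1 ∧
    row3 (rotZ ψ * P) 1 = -sin ψ • row3 P 0 + cos ψ • row3 P 1 ∧
    row3 (rotZ ψ * P) 2 = row3 P 2 := by
  refine ⟨?_, ?_, ?_⟩ <;> refine PiLp.ext fun j => ?_ <;>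
    simp [row3_apply, rotZ, Matrix.vecMul, dotProduct, Fin.sum_univ_three]

lemma SO3.exists_eq_rotZ_mul {P Q : Matrix (Fin 3) (Fin 3) ℝ} (hP : P ∈ SO3) (hQ : Q ∈ SO3)
    (h₂ : row3 Q 2 = row3 P 2) : ∃ ψ : ℝ, Q = rotZ ψ * P := by
  set c := ⟪row3 Q 0, row3 P 0⟫
  set s := ⟪row3 Q 0, row3 P 1⟫
  have hQ₀ : row3 Q 0 = c • row3 P 0 + s • row3 P 1 := by
    have hperp : ⟪row3 Q 0, row3 P 2⟫ = 0 := by rw [← h₂, SO3.inner_row3 hQ]; rfl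
    simpa [hperp] using SO3.eq_sum_inner_smul hP (row3 Q 0)
  have hcs : c ^ 2 + s ^ 2 = 1 := by
    have h := SO3.inner_row3 hQ 0 0
    rw [hQ₀] at h
    simp only [inner_add_left, inner_add_right, real_inner_smul_left, real_inner_smul_right,
      SO3.inner_row3 hP] at h
    norm_num at h
    linear_combination h
  obtain ⟨ψ, hcos, hsin⟩ := exists_cos_eq_and_sin_eq hcs
  refine ⟨ψ, SO3.ext_of_row3 hQ (SO3.mul_mem (rotZ_mem ψ) hP) ?_ ?_⟩
  · rw [(row3_rotZ_mul ψ P).1, hcos, hsin, hQ₀]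
  · rw [(row3_rotZ_mul ψ P).2.2, h₂]

namespace FTCOn

variable {f f' g g' : ℝ → E3} {a b : ℝ}

lemma intervalIntegrable (h : FTCOn f f' a b) {x y : ℝ} (hx : x ∈ Icc a b) (hy : y ∈ Icc a b) :
    IntervalIntegrable f' volume x y :=
  h.1.mono_set (uIcc_subset_uIcc (Icc_subset_uIcc hx) (Icc_subset_uIcc hy))

lemma sub_eq_integral_s6 (h : FTCOn f f' a b) {x y : ℝ} (hx : x ∈ Icc a b) (hy : y ∈ Icc a b) :
    f y - f x = ∫ s in x..y, f' s := by
  have ha : a ∈ Icc a b := ⟨le_rfl, hx.1.trans hx.2⟩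
  rw [h.2 y hy, h.2 x hx, ← intervalIntegral.integral_add_adjacent_intervals
    (h.intervalIntegrable ha hx) (h.intervalIntegrable hx hy)]
  abel

lemma mono {a' b' : ℝ} (h : FTCOn f f' a b) (h₁ : a ≤ a') (h₂ : a' ≤ b') (h₃ : b' ≤ b) :
    FTCOn f f' a' b' := by
  have hsub : Icc a' b' ⊆ Icc a b := Icc_subset_Icc h₁ h₃
  have ha' : a' ∈ Icc a' b' := ⟨le_rfl, h₂⟩
  refine ⟨h.intervalIntegrable (hsub ha') (hsub ⟨h₂, le_rfl⟩), fun t ht => ?_⟩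
  rw [← h.sub_eq_integral_s6 (hsub ha') (hsub ht)]
  abel

lemma continuousOn_s6 (h : FTCOn f f' a b) : ContinuousOn f (Icc a b) := by
  rcases lt_or_ge b a with hba | hab
  · simp [Icc_eq_empty_of_lt hba]
  have hprim := intervalIntegral.continuousOn_primitive_interval' h.1 left_mem_uIcc
  rw [uIcc_of_le hab] at hprim
  exact (continuousOn_const.add hprim).congr h.2

lemma neg (h : FTCOn f f' a b) : FTCOn (fun t => -f t) (fun t => -f' t) a b :=
  ⟨h.1.neg, fun t ht => by simp only [intervalIntegral.integral_neg, h.2 t ht]; abel⟩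

lemma of_hasDerivAt (hd : ∀ t, HasDerivAt f (f' t) t) (hc : Continuous f') : FTCOn f f' a b :=
  ⟨hc.intervalIntegrable a b, fun t _ => by
    rw [intervalIntegral.integral_eq_sub_of_hasDerivAt (fun x _ => hd x)
      (hc.intervalIntegrable a t)]
    abel⟩

lemma eqOn_of_ae_eq_zero (h : FTCOn f f' a b) (hz : ∀ᵐ t ∂volume.restrict (Ioo a b), f' t = 0) :
    EqOn f (fun _ => f a) (Icc a b) := by
  intro t ht
  have ha : a ∈ Icc a b := ⟨le_rfl, ht.1.trans ht.2⟩
  rw [← sub_eq_zero, h.sub_eq_integral_s6 ha ht, intervalIntegral.integral_of_le ht.1]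
  rw [restrict_Ioo_eq_restrict_Icc] at hz
  exact integral_eq_zero_of_ae (ae_restrict_of_ae_restrict_of_subset
    (Ioc_subset_Icc_self.trans (Icc_subset_Icc_right ht.2)) hz)

lemma glue {s : ℝ} (has : a ≤ s) (hsb : s ≤ b) (hf : FTCOn f f' a s) (hg : FTCOn g g' s b)
    (hfg : f s = g s) :
    FTCOn (fun t => if t ≤ s then f t else g t) (fun t => if t ≤ s then f' t else g' t) a b := by
  set F' : ℝ → E3 := fun t => if t ≤ s then f' t else g' t
  have hF'f : EqOn F' f' (Iic s) := fun x hx => if_pos hx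
  have hF'g : EqOn F' g' (Ioi s) := fun x hx => if_neg (not_le.mpr hx)
  have hint₁ : IntervalIntegrable F' volume a s :=
    hf.1.congr_uIoo fun x hx => by rw [uIoo_of_le has] at hx; exact (hF'f hx.2.le).symm
  have hint₂ : ∀ t ∈ Icc s b, IntervalIntegrable F' volume s t := fun t ht =>
    (hg.intervalIntegrable ⟨le_rfl, hsb⟩ ht).congr_uIoo fun x hx => by
      rw [uIoo_of_le ht.1] at hx; exact (hF'g hx.1).symm
  refine ⟨hint₁.trans (hint₂ b ⟨hsb, le_rfl⟩), fun t ht => ?_⟩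
  simp only [if_pos has]
  by_cases hts : t ≤ s
  · rw [if_pos hts, intervalIntegral.integral_congr_Ioo_of_le ht.1
      fun x hx => hF'f (hx.2.le.trans hts)]
    exact hf.2 t ⟨ht.1, hts⟩
  · rw [not_le] at hts
    rw [if_neg hts.not_ge, ← intervalIntegral.integral_add_adjacent_intervals hint₁
      (hint₂ t ⟨hts.le, ht.2⟩), intervalIntegral.integral_congr_Ioo_of_le has
      fun x hx => hF'f hx.2.le, intervalIntegral.integral_congr_Ioo_of_le hts.le
      fun x hx => hF'g hx.1, ← add_assoc, ← hf.2 s ⟨has, le_rfl⟩, hfg]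
    exact hg.2 t ⟨hts.le, ht.2⟩

end FTCOn

lemma ae_restrict_Ioo_of_ae_restrict_Ioo_Ioo {P : ℝ → Prop} {a s b : ℝ}
    (h₁ : ∀ᵐ t ∂volume.restrict (Ioo a s), P t) (h₂ : ∀ᵐ t ∂volume.restrict (Ioo s b), P t) :
    ∀ᵐ t ∂volume.restrict (Ioo a b), P t := by
  rw [restrict_Ioo_eq_restrict_Icc] at h₁ h₂ ⊢
  exact ae_restrict_of_ae_restrict_of_subset Icc_subset_Icc_union_Icc
    ((ae_restrict_union_iff _ _ _).mpr ⟨h₁, h₂⟩)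

def IsBddCurvFrame (β β' : ℝ → E3) (a b : ℝ) (r : ℝ → Matrix (Fin 3) (Fin 3) ℝ)
    (ρ' : Fin 3 → ℝ → E3) : Prop :=
  AdaptedFrameW11 β β' a b r ρ' ∧
    ∃ C, ∀ᵐ t ∂volume.restrict (Ioo a b), |⟪ρ' 0 t, row3 (r t) 1⟫| ≤ C

section Frames

variable {β β' : ℝ → E3} {a b : ℝ} {r r₂ : ℝ → Matrix (Fin 3) (Fin 3) ℝ}
  {ρ' ρ₂' : Fin 3 → ℝ → E3}

lemma bddGeodCurvOn_iff_exists_isBddCurvFrame :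
    BddGeodCurvOn β β' a b ↔ ∃ r ρ', IsBddCurvFrame β β' a b r ρ' := by
  constructor
  · rintro ⟨κ, C, hC, r, ρ', hr, hκ⟩
    exact ⟨r, ρ', hr, C, by filter_upwards [hC, hκ] with t hCt hκt; rwa [hκt]⟩
  · rintro ⟨r, ρ', hr, C, hC⟩
    exact ⟨fun t => ⟪ρ' 0 t, row3 (r t) 1⟫, C, hC, r, ρ', hr, ae_of_all _ fun _ => rfl⟩

lemma AdaptedFrameW11.mono {a' b' : ℝ} (h : AdaptedFrameW11 β β' a b r ρ') (h₁ : a ≤ a')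
    (h₂ : a' ≤ b') (h₃ : b' ≤ b) : AdaptedFrameW11 β β' a' b' r ρ' :=
  ⟨fun i => (h.1 i).mono h₁ h₂ h₃, fun t ht => h.2.1 t ⟨h₁.trans ht.1, ht.2.trans h₃⟩,
    ae_restrict_of_ae_restrict_of_subset (Ioo_subset_Ioo h₁ h₃) h.2.2.1,
    ae_restrict_of_ae_restrict_of_subset (Ioo_subset_Ioo h₁ h₃) h.2.2.2⟩

lemma AdaptedFrameW11.eqOn_row3_two (h : AdaptedFrameW11 β β' a b r ρ') (hβ : FTCOn β β' a b)
    (hab : a < b) : EqOn (fun t => row3 (r t) 2) β (Icc a b) :=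
  Measure.eqOn_Icc_of_ae_eq volume hab.ne (by rw [← restrict_Ioo_eq_restrict_Icc]; exact h.2.2.1)
    (h.1 2).continuousOn_s6 hβ.continuousOn_s6

lemma IsBddCurvFrame.mono {a' b' : ℝ} (h : IsBddCurvFrame β β' a b r ρ') (h₁ : a ≤ a')
    (h₂ : a' ≤ b') (h₃ : b' ≤ b) : IsBddCurvFrame β β' a' b' r ρ' :=
  ⟨h.1.mono h₁ h₂ h₃, h.2.imp fun _ hC =>
    ae_restrict_of_ae_restrict_of_subset (Ioo_subset_Ioo h₁ h₃) hC⟩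

lemma IsBddCurvFrame.glue {s : ℝ} (has : a ≤ s) (hsb : s ≤ b)
    (h₁ : IsBddCurvFrame β β' a s r ρ') (h₂ : IsBddCurvFrame β β' s b r₂ ρ₂') (hs : r s = r₂ s) :
    IsBddCurvFrame β β' a b (fun t => if t ≤ s then r t else r₂ t)
      (fun i t => if t ≤ s then ρ' i t else ρ₂' i t) := by
  obtain ⟨⟨hρ₁, hSO₁, hβ₁, hcr₁⟩, C₁, hC₁⟩ := h₁
  obtain ⟨⟨hρ₂, hSO₂, hβ₂, hcr₂⟩, C₂, hC₂⟩ := h₂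
  have glue_ae {P : ℝ → Matrix (Fin 3) (Fin 3) ℝ → (Fin 3 → E3) → Prop}
      (h₁ : ∀ᵐ t ∂volume.restrict (Ioo a s), P t (r t) (ρ' · t))
      (h₂ : ∀ᵐ t ∂volume.restrict (Ioo s b), P t (r₂ t) (ρ₂' · t)) :
      ∀ᵐ t ∂volume.restrict (Ioo a b),
        P t (if t ≤ s then r t else r₂ t) (fun i => if t ≤ s then ρ' i t else ρ₂' i t) := by
    refine ae_restrict_Ioo_of_ae_restrict_Ioo_Ioo (s := s) ?_ ?_
    · filter_upwards [h₁, ae_restrict_mem measurableSet_Ioo] with t ht hts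
      simpa only [if_pos hts.2.le] using ht
    · filter_upwards [h₂, ae_restrict_mem measurableSet_Ioo] with t ht hts
      simpa only [if_neg hts.1.not_ge] using ht
  refine ⟨⟨fun i => ?_, fun t ht => ?_, ?_, ?_⟩, max C₁ C₂, ?_⟩
  · simpa only [apply_ite (row3 · i)] using (hρ₁ i).glue has hsb (hρ₂ i) (by rw [hs])
  · dsimp only
    split_ifs with hts
    exacts [hSO₁ t ⟨ht.1, hts⟩, hSO₂ t ⟨(not_le.mp hts).le, ht.2⟩]
  · exact glue_ae (P := fun t M _ => row3 M 2 = β t) hβ₁ hβ₂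
  · exact glue_ae (P := fun t M _ => cross3 (β' t) (row3 M 0) = 0) hcr₁ hcr₂
  · exact glue_ae (P := fun _ M ρ => |⟪ρ 0, row3 M 1⟫| ≤ max C₁ C₂)
      (hC₁.mono fun _ h => h.trans (le_max_left _ _))
      (hC₂.mono fun _ h => h.trans (le_max_right _ _))

lemma row3_rotZ_pi_mul (P : Matrix (Fin 3) (Fin 3) ℝ) (i : Fin 3) :
    row3 (rotZ π * P) i = if i = 2 then row3 P i else -row3 P i := by
  obtain ⟨h₀, h₁, h₂⟩ := row3_rotZ_mul π P
  fin_cases i <;> simp [h₀, h₁, h₂]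

lemma IsBddCurvFrame.rotZ_pi_mul (h : IsBddCurvFrame β β' a b r ρ') :
    IsBddCurvFrame β β' a b (fun t => rotZ π * r t)
      (fun i t => if i = 2 then ρ' i t else -ρ' i t) := by
  obtain ⟨⟨hρ, hSO, hβ, hcr⟩, C, hC⟩ := h
  refine ⟨⟨fun i => ?_, fun t ht => SO3.mul_mem (rotZ_mem π) (hSO t ht), ?_, ?_⟩, C, ?_⟩
  · simp only [row3_rotZ_pi_mul]
    by_cases hi : i = 2
    · simpa only [hi, if_true] using hρ 2
    · simpa only [hi, if_false] using (hρ i).neg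
  · filter_upwards [hβ] with t ht
    simpa [row3_rotZ_pi_mul] using ht
  · filter_upwards [hcr] with t ht
    simp [row3_rotZ_pi_mul, cross3_neg_right, ht]
  · filter_upwards [hC] with t ht
    simpa [row3_rotZ_pi_mul] using ht

lemma hasDerivAt_row3_rotZ_mul (P : Matrix (Fin 3) (Fin 3) ℝ) (ω a t : ℝ) :
    HasDerivAt (fun t => row3 (rotZ (ω * (t - a)) * P) 0)
      (ω • row3 (rotZ (ω * (t - a)) * P) 1) t ∧
    HasDerivAt (fun t => row3 (rotZ (ω * (t - a)) * P) 1)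
      (-ω • row3 (rotZ (ω * (t - a)) * P) 0) t := by
  have hθ : HasDerivAt (fun t => ω * (t - a)) ω t := by
    simpa using ((hasDerivAt_id t).sub_const a).const_mul ω
  simp only [row3_rotZ_mul]
  constructor
  · refine ((hθ.cos.smul_const (row3 P 0)).add (hθ.sin.smul_const (row3 P 1))).congr_deriv ?_
    simp only [smul_add, smul_smul]
    congr 2 <;> ring
  · refine ((hθ.sin.neg.smul_const (row3 P 0)).add
      (hθ.cos.smul_const (row3 P 1))).congr_deriv ?_
    simp only [smul_add, smul_smul]
    congr 2 <;> ring

lemma exists_isBddCurvFrame_rotZ_mul {P : Matrix (Fin 3) (Fin 3) ℝ} (hP : P ∈ SO3) (ω : ℝ)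
    (hβ : ∀ t ∈ Icc a b, β t = row3 P 2) (hβ' : ∀ᵐ t ∂volume.restrict (Ioo a b), β' t = 0) :
    ∃ ρ', IsBddCurvFrame β β' a b (fun t => rotZ (ω * (t - a)) * P) ρ' := by
  set R : ℝ → Matrix (Fin 3) (Fin 3) ℝ := fun t => rotZ (ω * (t - a)) * P
  have hR : ∀ t, R t ∈ SO3 := fun t => SO3.mul_mem (rotZ_mem _) hP
  have hR₂ : ∀ t, row3 (R t) 2 = row3 P 2 := fun t => (row3_rotZ_mul _ P).2.2
  have hd := hasDerivAt_row3_rotZ_mul P ω a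
  have hc₀ : Continuous fun t => row3 (R t) 0 :=
    continuous_iff_continuousAt.2 fun t => (hd t).1.continuousAt
  have hc₁ : Continuous fun t => row3 (R t) 1 :=
    continuous_iff_continuousAt.2 fun t => (hd t).2.continuousAt
  refine ⟨![fun t => ω • row3 (R t) 1, fun t => -ω • row3 (R t) 0, 0],
    ⟨fun i => ?_, fun t _ => hR t, ?_, ?_⟩, |ω|, ae_of_all _ fun t => ?_⟩
  · fin_cases i
    · exact FTCOn.of_hasDerivAt (fun t => (hd t).1) (hc₁.const_smul ω)
    · exact FTCOn.of_hasDerivAt (fun t => (hd t).2) (hc₀.const_smul (-ω))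
    · show FTCOn (fun t => row3 (R t) 2) (fun _ => 0) a b
      simp only [hR₂]
      exact FTCOn.of_hasDerivAt (fun t => hasDerivAt_const t _) continuous_const
  · filter_upwards [ae_restrict_mem measurableSet_Ioo] with t ht
    rw [hR₂, hβ t (Ioo_subset_Icc_self ht)]
  · filter_upwards [hβ'] with t ht
    rw [ht, cross3_zero_left]
  · simp [real_inner_smul_left, SO3.norm_row3 (hR t)]

lemma IsBddCurvFrame.exists_glue_of_row3_zero_eq_or_eq_neg {s : ℝ} (has : a ≤ s) (hsb : s ≤ b)
    (h₁ : IsBddCurvFrame β β' a s r ρ') (h₂ : IsBddCurvFrame β β' s b r₂ ρ₂')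
    (h₀ : row3 (r s) 0 = row3 (r₂ s) 0 ∨ row3 (r s) 0 = -row3 (r₂ s) 0)
    (h₂₂ : row3 (r s) 2 = row3 (r₂ s) 2) : ∃ r ρ', IsBddCurvFrame β β' a b r ρ' := by
  have hr : r s ∈ SO3 := h₁.1.2.1 s ⟨has, le_rfl⟩
  have hr₂ : r₂ s ∈ SO3 := h₂.1.2.1 s ⟨le_rfl, hsb⟩
  rcases h₀ with h₀ | h₀
  · exact ⟨_, _, h₁.glue has hsb h₂ (SO3.ext_of_row3 hr hr₂ h₀ h₂₂)⟩
  · refine ⟨_, _, h₁.glue has hsb h₂.rotZ_pi_mul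
      (SO3.ext_of_row3 hr (SO3.mul_mem (rotZ_mem π) hr₂) ?_ ?_)⟩ <;>
    simp [row3_rotZ_pi_mul, h₀, h₂₂]

lemma IsBddCurvFrame.exists_glue_of_ae_deriv_eq_zero {c d : ℝ} (hab : a ≤ b) (hbc : b < c)
    (hcd : c ≤ d) (h₁ : IsBddCurvFrame β β' a b r ρ') (h₂ : IsBddCurvFrame β β' c d r₂ ρ₂')
    (hβ : ∀ t ∈ Icc b c, β t = row3 (r b) 2) (hβ' : ∀ᵐ t ∂volume.restrict (Ioo b c), β' t = 0)
    (h₂₂ : row3 (r₂ c) 2 = row3 (r b) 2) : ∃ r ρ', IsBddCurvFrame β β' a d r ρ' := by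
  have hr : r b ∈ SO3 := h₁.1.2.1 b ⟨hab, le_rfl⟩
  obtain ⟨ψ, hψ⟩ := SO3.exists_eq_rotZ_mul hr (h₂.1.2.1 c ⟨le_rfl, hcd⟩) h₂₂
  obtain ⟨ρ, hrot⟩ := exists_isBddCurvFrame_rotZ_mul hr (ψ / (c - b)) hβ hβ'
  have h₁₂ := h₁.glue hab hbc.le hrot (by simp [rotZ_zero])
  refine ⟨_, _, h₁₂.glue (hab.trans hbc.le) hcd h₂ ?_⟩
  simp [if_neg hbc.not_ge, div_mul_cancel₀ _ (sub_ne_zero.2 hbc.ne'), hψ]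

theorem BddGeodCurvOn.union {c d : ℝ} (hβ : FTCOn β β' a d) (hab : a ≤ b) (hbc : b < c)
    (hcd : c ≤ d) (h₁ : BddGeodCurvOn β β' a c) (h₂ : BddGeodCurvOn β β' b d) :
    BddGeodCurvOn β β' a d := by
  rw [bddGeodCurvOn_iff_exists_isBddCurvFrame] at h₁ h₂ ⊢
  obtain ⟨r, ρ', hr⟩ := h₁
  obtain ⟨r₂, ρ₂', hr₂⟩ := h₂
  have hrβ := hr.1.eqOn_row3_two (hβ.mono le_rfl (hab.trans hbc.le) hcd) (hab.trans_lt hbc)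
  have hr₂β := hr₂.1.eqOn_row3_two (hβ.mono hab (hbc.le.trans hcd) le_rfl) (hbc.trans_le hcd)
  by_cases hβ' : ∀ᵐ t ∂volume.restrict (Ioo b c), β' t = 0
  · have hconst : ∀ t ∈ Icc b c, β t = row3 (r b) 2 := fun t ht =>
      ((hβ.mono hab hbc.le hcd).eqOn_of_ae_eq_zero hβ' ht).trans (hrβ ⟨hab, hbc.le⟩).symm
    exact (hr.mono le_rfl hab hbc.le).exists_glue_of_ae_deriv_eq_zero hab hbc hcd
      (hr₂.mono hbc.le hcd le_rfl) hconst hβ'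
      ((hr₂β ⟨hbc.le, hcd⟩).trans (hconst c ⟨hbc.le, le_rfl⟩))
  · obtain ⟨s, hs, hβ's, hcr, hcr₂⟩ : ∃ s ∈ Ioo b c, β' s ≠ 0 ∧
        cross3 (β' s) (row3 (r s) 0) = 0 ∧ cross3 (β' s) (row3 (r₂ s) 0) = 0 := by
      by_contra! hne
      refine hβ' ?_
      filter_upwards [ae_restrict_mem measurableSet_Ioo,
        ae_restrict_of_ae_restrict_of_subset (Ioo_subset_Ioo_left hab) hr.1.2.2.2,
        ae_restrict_of_ae_restrict_of_subset (Ioo_subset_Ioo_right hcd) hr₂.1.2.2.2]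
        with t ht hcrt hcr₂t
      by_contra hβ't
      exact hne t ht hβ't hcrt hcr₂t
    have has : a ≤ s := hab.trans hs.1.le
    have hsd : s ≤ d := hs.2.le.trans hcd
    exact (hr.mono le_rfl has hs.2.le).exists_glue_of_row3_zero_eq_or_eq_neg has hsd
      (hr₂.mono hs.1.le hsd le_rfl)
      (eq_or_eq_neg_of_cross3_eq_zero_s6 hβ's hcr hcr₂ (SO3.norm_row3 (hr.1.2.1 s ⟨has, hs.2.le⟩) 0)
        (SO3.norm_row3 (hr₂.1.2.1 s ⟨hs.1.le, hsd⟩) 0))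
      ((hrβ ⟨has, hs.2.le⟩).trans (hr₂β ⟨hs.1.le, hsd⟩).symm)

end Frames

lemma holds_of_local_of_glue {P : ℝ → ℝ → Prop} {a b : ℝ} (hab : a < b)
    (hglue : ∀ x y z w, a ≤ x → x ≤ y → y < z → z ≤ w → w ≤ b → P x z → P y w → P x w)
    (hloc : ∀ t ∈ Icc a b, ∃ ε > 0, P (max a (t - ε)) (min b (t + ε))) : P a b := by
  set S := {x | x ∈ Ioc a b ∧ P a x}
  obtain ⟨ε₀, hε₀, h₀⟩ := hloc a ⟨le_rfl, hab.le⟩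
  rw [max_eq_left (by linarith)] at h₀
  have hS₀ : min b (a + ε₀) ∈ S := ⟨⟨lt_min hab (by linarith), min_le_left _ _⟩, h₀⟩
  have hSbdd : BddAbove S := ⟨b, fun x hx => hx.1.2⟩
  set x₁ := sSup S
  have hax₁ : a < x₁ := hS₀.1.1.trans_le (le_csSup hSbdd hS₀)
  have hx₁b : x₁ ≤ b := csSup_le ⟨_, hS₀⟩ fun x hx => hx.1.2
  obtain ⟨ε, hε, hx₁⟩ := hloc x₁ ⟨hax₁.le, hx₁b⟩
  obtain ⟨y, hyS, hy⟩ := exists_lt_of_lt_csSup ⟨_, hS₀⟩ (sub_lt_self x₁ hε)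
  have hPa : P a (min b (x₁ + ε)) :=
    hglue _ _ _ _ le_rfl (le_max_left _ _) (max_lt hyS.1.1 hy)
      (le_min hyS.1.2 (by linarith [le_csSup hSbdd hyS])) (min_le_left _ _) hyS.2 hx₁
  rcases le_or_gt b (x₁ + ε) with hb | hb
  · rwa [min_eq_left hb] at hPa
  · rw [min_eq_right hb.le] at hPa
    linarith [le_csSup hSbdd ⟨⟨by linarith, hb.le⟩, hPa⟩]

theorem statement6_general
    (β β' : ℝ → E3) (hβ : FTCOn β β' 0 1)
    (hloc : ∀ t₀ ∈ Set.Icc (0:ℝ) 1, ∃ ε > (0:ℝ),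
      BddGeodCurvOn β β' (max 0 (t₀ - ε)) (min 1 (t₀ + ε))) :
    BddGeodCurvOn β β' 0 1 :=
  holds_of_local_of_glue zero_lt_one
    (fun _ _ _ _ hx hxy hyz hzw hw => BddGeodCurvOn.union
      (hβ.mono hx (hxy.trans (hyz.le.trans hzw)) hw) hxy hyz hzw) hloc

/-- Having bounded geodesic curvature is a local property: if
`β ∈ W^{1,1}(I, S²)` has bounded geodesic curvature in a neighbourhood (in `[0,1]`) of every
point of `[0,1]`, then it has bounded geodesic curvature on `I`. -/
theorem statement6
    (β β' : ℝ → E3) (hβ : FTCOn β β' 0 1)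
    (hsphere : ∀ t ∈ Set.Icc (0:ℝ) 1, ‖β t‖ = 1)
    (hloc : ∀ t₀ ∈ Set.Icc (0:ℝ) 1, ∃ ε > (0:ℝ),
      BddGeodCurvOn β β' (max 0 (t₀ - ε)) (min 1 (t₀ + ε))) :
    BddGeodCurvOn β β' 0 1 :=
  statement6_general β β' hβ hloc
end
end
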